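/- Let f, g : [0,∞) → [0,∞) be strictly increasing piecewise-linear quasi-isometries and let (a_n) be a strictly increasing sequence tending to ∞ with a_1 > 0 and f(a_n) = g(a_n) = a_n for all n. Suppose for each n there is a point x_n ∈ (a_n, a_{n+1}) such that f is affine with slope λ_n on [a_n, x_n] and with slope μ_n on [x_n, a_{n+1}], and g is affine with slope λ'_n on [a_n, x_n] and with slope μ'_n on [x_n, a_{n+1}]. Assume there is L > 1 with 1/L ≤ λ_n, μ_n, λ'_n, μ'_n ≤ L for all n, that liminf_{x→∞} f(x)/x ≥ 1 and liminf_{x→∞} g(x)/x ≥ 1, and that there exist ε > 0 and constants K, K' > 1 such that |λ_n − 1| > ε, |λ'_n − 1| > ε, |λ_n − λ'_n| > ε, and K < x_n/a_n < K' and K < a_{n+1}/x_n < K' for all n. Then for all quasi-isometries h, h' of [0,∞) with h(x)/x → 1 and h'(x)/x → 1 as x → ∞, the maps h∘f and h'∘g do not commute in QI(ℝ₊); that is, sup_{x≥0} |h(f(h'(g(x)))) − h'(g(h(f(x))))| = ∞. -/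

import Mathlib

open Filter Topology

/-- A quasi-isometry of the ray `[0,∞)`, modelled as a real function:
it maps nonnegatives to nonnegatives, satisfies the two-sided quasi-isometry
inequality with a constant `K > 1` on nonnegative arguments, and its image is
coarsely dense in `[0,∞)`. -/
def IsQI (g : ℝ → ℝ) : Prop :=
  (∀ x, 0 ≤ x → 0 ≤ g x) ∧
  (∃ K : ℝ, 1 < K ∧ ∀ x y, 0 ≤ x → 0 ≤ y →
    (1 / K) * |x - y| - K ≤ |g x - g y| ∧ |g x - g y| ≤ K * |x - y| + K) ∧
  (∃ K' : ℝ, 0 < K' ∧ ∀ z, 0 ≤ z → ∃ x, 0 ≤ x ∧ |g x - z| ≤ K')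

/-- `Sset g` is the set of all subsequential limits of `g x / x` as `x → ∞`:
limits of `g (u n) / u n` over sequences `u n → ∞` for which this quotient converges. -/
def Sset (g : ℝ → ℝ) : Set ℝ :=
  { c | ∃ u : ℕ → ℝ, (∀ n, 0 ≤ u n) ∧ Tendsto u atTop atTop ∧
      Tendsto (fun n => g (u n) / u n) atTop (𝓝 c) }

/-- `g` is piecewise linear on `[0,∞)`: there is a strictly increasing divergent
sequence of breakpoints starting at `0` on whose consecutive intervals `g` is affine. -/
def IsPL (g : ℝ → ℝ) : Prop :=
  ∃ t : ℕ → ℝ, t 0 = 0 ∧ StrictMono t ∧ Tendsto t atTop atTop ∧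
    ∀ n, ∃ lam : ℝ, ∀ x ∈ Set.Icc (t n) (t (n + 1)),
      g x = g (t n) + lam * (x - t n)

/-- Two quasi-isometries `f, g` of `[0,∞)` are H-equivalent if `f` is boundedly close
(on `[0,∞)`) to `h ∘ g` for some quasi-isometry `h` with `h y / y → 1`. -/
def HEquiv (f g : ℝ → ℝ) : Prop :=
  ∃ h : ℝ → ℝ, IsQI h ∧ Tendsto (fun y => h y / y) atTop (𝓝 1) ∧
    ∃ C : ℝ, ∀ x, 0 ≤ x → |f x - h (g x)| ≤ C

/-!
On each block `[a n, a (n+1)]` both maps fix the endpoints, and `liminf f t / t ≥ 1` together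
with `|lam n - 1| > eps` and `x n > K a n` forces `lam n, lam' n > 1 + eps` for large `n`.
Say `lam n > lam' n`. At a point `t` where `f t = x n + d` has just passed `x n` while
`g t` has not, `f (g t) - g (f t) = (lam' n - mu' n) d`, and `g (a (n+1)) = a (n+1)` gives
`lam' n - mu' n ≥ lam' n - 1 > eps`; the ratio bounds make this gap at least `c t`.
On the other hand `h, h'` are asymptotic to the identity and `f, g` are Lipschitz, so
`h ∘ f ∘ h' ∘ g - f ∘ g` and `h' ∘ g ∘ h ∘ f - g ∘ f` are `o(t)`. A bounded difference of the
two conjugated compositions would thus make `f ∘ g - g ∘ f = o(t)`.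
-/

open Set Asymptotics NNReal

lemma lipschitzOnWith_Icc_of_affine {F : ℝ → ℝ} {K : ℝ≥0} {p q lam : ℝ}
    (hF : ∀ t ∈ Icc p q, F t = F p + lam * (t - p)) (hlam : |lam| ≤ K) :
    LipschitzOnWith K F (Icc p q) := by
  refine LipschitzOnWith.of_dist_le_mul fun u hu v hv => ?_
  rw [Real.dist_eq, Real.dist_eq, hF u hu, hF v hv,
    show F p + lam * (u - p) - (F p + lam * (v - p)) = lam * (u - v) by ring, abs_mul]
  exact mul_le_mul_of_nonneg_right hlam (abs_nonneg _)

lemma LipschitzOnWith.Icc_union_Icc {F : ℝ → ℝ} {K : ℝ≥0} {p q r : ℝ}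
    (h₁ : LipschitzOnWith K F (Icc p q)) (h₂ : LipschitzOnWith K F (Icc q r)) :
    LipschitzOnWith K F (Icc p r) := by
  have across : ∀ u ∈ Icc p q, ∀ v ∈ Icc q r, dist (F u) (F v) ≤ K * dist u v := by
    intro u hu v hv
    have hq₁ : q ∈ Icc p q := ⟨hu.1.trans hu.2, le_rfl⟩
    have hq₂ : q ∈ Icc q r := ⟨le_rfl, hv.1.trans hv.2⟩
    have hqu := h₁.dist_le_mul u hu q hq₁
    have hqv := h₂.dist_le_mul q hq₂ v hv
    calc dist (F u) (F v) ≤ dist (F u) (F q) + dist (F q) (F v) := dist_triangle _ _ _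
      _ ≤ K * dist u q + K * dist q v := add_le_add hqu hqv
      _ = K * dist u v := by
        rw [Real.dist_eq, Real.dist_eq, Real.dist_eq, abs_of_nonpos (sub_nonpos.2 hu.2),
          abs_of_nonpos (sub_nonpos.2 hv.1), abs_of_nonpos (sub_nonpos.2 (hu.2.trans hv.1))]
        ring
  refine LipschitzOnWith.of_dist_le_mul fun u hu v hv => ?_
  rcases le_total u q with huq | hqu <;> rcases le_total v q with hvq | hqv
  · exact h₁.dist_le_mul u ⟨hu.1, huq⟩ v ⟨hv.1, hvq⟩
  · exact across u ⟨hu.1, huq⟩ v ⟨hqv, hv.2⟩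
  · rw [dist_comm, dist_comm u]; exact across v ⟨hv.1, hvq⟩ u ⟨hqu, hu.2⟩
  · exact h₂.dist_le_mul u ⟨hqu, hu.2⟩ v ⟨hqv, hv.2⟩

lemma lipschitzOnWith_Ici_of_Icc_succ {F : ℝ → ℝ} {K : ℝ≥0} {b : ℕ → ℝ}
    (hb : Tendsto b atTop atTop) (hF : ∀ n, LipschitzOnWith K F (Icc (b n) (b (n + 1)))) :
    LipschitzOnWith K F (Ici (b 0)) := by
  have hIcc : ∀ n, LipschitzOnWith K F (Icc (b 0) (b n)) := by
    intro n
    induction n with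
    | zero =>
      refine LipschitzOnWith.of_dist_le_mul fun u hu v hv => ?_
      rw [le_antisymm (hu.2.trans hv.1) (hv.2.trans hu.1), dist_self, dist_self, mul_zero]
    | succ n ih => exact ih.Icc_union_Icc (hF n)
  refine LipschitzOnWith.of_dist_le_mul fun u hu v hv => ?_
  obtain ⟨n, hn⟩ := (hb.eventually_ge_atTop (max u v)).exists
  exact (hIcc n).dist_le_mul u ⟨hu, (le_max_left _ _).trans hn⟩ v ⟨hv, (le_max_right _ _).trans hn⟩

lemma lipschitzOnWith_Ici_of_affine_pieces {F : ℝ → ℝ} {K : ℝ≥0} {a x lam mu : ℕ → ℝ}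
    (ha : Tendsto a atTop atTop)
    (h₁ : ∀ n, ∀ t ∈ Icc (a n) (x n), F t = F (a n) + lam n * (t - a n))
    (h₂ : ∀ n, ∀ t ∈ Icc (x n) (a (n + 1)), F t = F (x n) + mu n * (t - x n))
    (hlam : ∀ n, |lam n| ≤ K) (hmu : ∀ n, |mu n| ≤ K) :
    LipschitzOnWith K F (Ici (a 0)) :=
  lipschitzOnWith_Ici_of_Icc_succ ha fun n =>
    (lipschitzOnWith_Icc_of_affine (h₁ n) (hlam n)).Icc_union_Icc
      (lipschitzOnWith_Icc_of_affine (h₂ n) (hmu n))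

lemma LipschitzOnWith.isBigO_id_atTop {F : ℝ → ℝ} {K : ℝ≥0} {c : ℝ}
    (hF : LipschitzOnWith K F (Ici c)) : F =O[atTop] id := by
  have hsub : (fun t => F t - F c) =O[atTop] fun t => t - c := by
    refine IsBigO.of_bound K ?_
    filter_upwards [eventually_ge_atTop c] with t ht
    simpa only [Real.norm_eq_abs, ← Real.dist_eq] using hF.dist_le_mul t ht c self_mem_Ici
  have hlin : (fun t => t - c) =O[atTop] id :=
    (isBigO_refl _ _).sub (isLittleO_const_id_atTop c).isBigO
  exact ((hsub.trans hlin).add (isLittleO_const_id_atTop (F c)).isBigO).congr_left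
    fun t => by ring

lemma tendsto_atTop_of_monotoneOn_of_le_apply {F : ℝ → ℝ} {a : ℕ → ℝ} {c : ℝ}
    (hF : MonotoneOn F (Ici c)) (hac : ∀ n, c ≤ a n) (hfix : ∀ n, a n ≤ F (a n))
    (ha : Tendsto a atTop atTop) : Tendsto F atTop atTop := by
  refine tendsto_atTop.2 fun y => ?_
  obtain ⟨n, hn⟩ := (ha.eventually_ge_atTop y).exists
  filter_upwards [eventually_ge_atTop (a n)] with t ht
  exact hn.trans ((hfix n).trans (hF (hac n) ((hac n).trans ht) ht))

lemma isLittleO_comp_sub_comp {h F φ : ℝ → ℝ} {K : ℝ≥0} {c : ℝ} (hh : h ~[atTop] id)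
    (hF : LipschitzOnWith K F (Ici c)) (hφ : Tendsto φ atTop atTop) (hφO : φ =O[atTop] id) :
    (fun t => F (h (φ t)) - F (φ t)) =o[atTop] id := by
  have hhφ : (fun t => h (φ t)) ~[atTop] φ := hh.comp_tendsto hφ
  have hsub : (fun t => h (φ t) - φ t) =o[atTop] id := hhφ.isLittleO.trans_isBigO hφO
  have hhφ_top : Tendsto (fun t => h (φ t)) atTop atTop := hhφ.symm.tendsto_atTop hφ
  refine (IsBigO.of_bound K ?_).trans_isLittleO hsub
  filter_upwards [hφ.eventually_ge_atTop c, hhφ_top.eventually_ge_atTop c] with t ht ht'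
  simpa only [Real.norm_eq_abs, ← Real.dist_eq] using hF.dist_le_mul _ ht' _ ht

lemma isLittleO_comp_nearId_comp_sub {h h' f g : ℝ → ℝ} {K : ℝ≥0} {c : ℝ}
    (hh : h ~[atTop] id) (hh' : h' ~[atTop] id)
    (hf : LipschitzOnWith K f (Ici c)) (hg : LipschitzOnWith K g (Ici c))
    (hf_top : Tendsto f atTop atTop) (hg_top : Tendsto g atTop atTop) :
    (fun t => h (f (h' (g t))) - f (g t)) =o[atTop] id := by
  have hh'g : Tendsto (fun t => h' (g t)) atTop atTop :=
    (hh'.symm.tendsto_atTop tendsto_id).comp hg_top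
  have hψO : (fun t => f (h' (g t))) =O[atTop] id :=
    (hf.isBigO_id_atTop.comp_tendsto hh'g).trans
      ((hh'.isBigO.comp_tendsto hg_top).trans hg.isBigO_id_atTop)
  have hout : (fun t => h (f (h' (g t))) - f (h' (g t))) =o[atTop] id :=
    isLittleO_comp_sub_comp (F := id) (c := 0) hh LipschitzWith.id.lipschitzOnWith
      (hf_top.comp hh'g) hψO
  exact (hout.add (isLittleO_comp_sub_comp hh' hf hg_top hg.isBigO_id_atTop)).congr_left
    fun t => by ring

lemma isLittleO_comp_sub_comp_swap_of_bounded_comm {h h' f g : ℝ → ℝ} {K : ℝ≥0} {c C : ℝ}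
    (hh : h ~[atTop] id) (hh' : h' ~[atTop] id)
    (hf : LipschitzOnWith K f (Ici c)) (hg : LipschitzOnWith K g (Ici c))
    (hf_top : Tendsto f atTop atTop) (hg_top : Tendsto g atTop atTop)
    (hC : ∀ t, 0 ≤ t → |h (f (h' (g t))) - h' (g (h (f t)))| ≤ C) :
    (fun t => f (g t) - g (f t)) =o[atTop] id := by
  have hbdd : (fun t => h (f (h' (g t))) - h' (g (h (f t)))) =o[atTop] id := by
    refine (IsBigO.of_bound C ?_).trans_isLittleO (isLittleO_const_id_atTop (1 : ℝ))
    filter_upwards [eventually_ge_atTop 0] with t ht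
    simpa only [Real.norm_eq_abs, abs_one, mul_one] using hC t ht
  exact ((isLittleO_comp_nearId_comp_sub hh' hh hg hf hg_top hf_top).sub
    ((isLittleO_comp_nearId_comp_sub hh hh' hf hg hf_top hg_top).sub hbdd)).congr_left
    fun t => by ring

lemma Asymptotics.IsLittleO.not_frequently_mul_le_abs {u : ℝ → ℝ} (hu : u =o[atTop] id)
    {c : ℝ} (hc : 0 < c) : ¬ ∃ᶠ t in atTop, c * t ≤ |u t| := by
  intro hfreq
  obtain ⟨t, ⟨hlow, hup⟩, ht⟩ :=
    ((hfreq.and_eventually (hu.bound (half_pos hc))).and_eventually (eventually_gt_atTop 0)).exists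
  rw [Real.norm_eq_abs, Real.norm_eq_abs, id, abs_of_pos ht] at hup
  nlinarith

lemma eventually_one_add_lt_slope {f : ℝ → ℝ} {a x lam : ℕ → ℝ} {K eps : ℝ}
    (hf : ∀ᶠ t in atTop, 0 ≤ f t) (hlim : 1 ≤ liminf (fun t => f t / t) atTop)
    (ha : ∀ n, 0 < a n) (hK : 1 < K) (hKx : ∀ n, K * a n < x n) (hx : Tendsto x atTop atTop)
    (hfa : ∀ n, f (a n) = a n) (hfx : ∀ n, f (x n) = f (a n) + lam n * (x n - a n))
    (heps : 0 < eps) (hsep : ∀ n, eps < |lam n - 1|) :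
    ∀ᶠ n in atTop, 1 + eps < lam n := by
  by_contra hcon
  rw [not_eventually] at hcon
  have hsmall : ∃ᶠ n in atTop, lam n < 1 - eps := hcon.mono fun n hn => by
    rcases lt_abs.1 (hsep n) with h | h <;> linarith
  have hratio : ∃ᶠ n in atTop, f (x n) / x n ≤ 1 - eps * (1 - K⁻¹) := hsmall.mono fun n hn => by
    have hax : a n < x n := by nlinarith [ha n, hKx n]
    rw [div_le_iff₀ ((ha n).trans hax), hfx n, hfa n]
    have hKinv : K⁻¹ * x n > a n := by
      rw [gt_iff_lt, ← div_eq_inv_mul, lt_div_iff₀ (by linarith)]; linarith [hKx n]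
    have h₁ : eps * (x n - a n) ≤ (1 - lam n) * (x n - a n) :=
      mul_le_mul_of_nonneg_right (by linarith) (by linarith)
    have h₂ : eps * (x n - K⁻¹ * x n) ≤ eps * (x n - a n) :=
      mul_le_mul_of_nonneg_left (by linarith) heps.le
    linarith
  have hbdd : IsBoundedUnder (· ≥ ·) atTop fun t : ℝ => f t / t :=
    isBoundedUnder_of_eventually_ge (a := 0) <| (hf.and (eventually_gt_atTop 0)).mono
      fun t ht => div_nonneg ht.1 ht.2.le
  have hle := liminf_le_of_frequently_le (hx.frequently hratio) hbdd
  have hKinv : K⁻¹ < 1 := inv_lt_one_of_one_lt₀ hK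
  nlinarith

lemma exists_le_comp_sub_comp_swap {f g : ℝ → ℝ} {A X B lam lam' mu' eps L : ℝ}
    (hAX : A ≤ X) (hXB : X < B) (hfA : f A = A) (hgA : g A = A) (hgB : g B = B)
    (hf₁ : ∀ t ∈ Icc A X, f t = f A + lam * (t - A))
    (hg₁ : ∀ t ∈ Icc A X, g t = g A + lam' * (t - A))
    (hg₂ : ∀ t ∈ Icc X B, g t = g X + mu' * (t - X))
    (heps : 0 ≤ eps) (hlam' : eps ≤ lam' - 1) (hlam : eps ≤ lam - lam') (hL : lam' ≤ L) :
    ∃ t ∈ Icc A X, eps * min (B - X) (eps * (X - A) / L) ≤ f (g t) - g (f t) := by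
  have hlam'0 : 0 < lam' := by linarith
  have hlam0 : 0 < lam := by linarith
  -- `t` is chosen so that `f t = X + d` just passes `X` while `g t` has not reached `X` yet
  set d := min (B - X) ((lam - lam') * (X - A) / lam')
  have hd₀ : 0 ≤ d :=
    le_min (by linarith) (div_nonneg (mul_nonneg (by linarith) (by linarith)) hlam'0.le)
  have hdB : d ≤ B - X := min_le_left _ _
  have hdX : lam' * d ≤ (lam - lam') * (X - A) := by
    rw [← le_div_iff₀' hlam'0]; exact min_le_right _ _
  set t := A + (X + d - A) / lam with ht
  have hft_lin : lam * (t - A) = X + d - A := by rw [ht]; field_simp; ring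
  have hgt_lin : lam' * (t - A) ≤ X - A := by
    rw [← mul_le_mul_iff_of_pos_left hlam0]; nlinarith
  have htA : A ≤ t := by nlinarith
  have htX : t ≤ X := by nlinarith
  have hgt : g t = A + lam' * (t - A) := by rw [hg₁ t ⟨htA, htX⟩, hgA]
  have hft : f t = X + d := by rw [hf₁ t ⟨htA, htX⟩, hfA]; linarith
  have hfgt : f (g t) = A + lam' * (X + d - A) := by
    rw [hf₁ (g t) ⟨by nlinarith, by linarith⟩, hfA, hgt]; linear_combination lam' * hft_lin
  have hgX : g X = A + lam' * (X - A) := by rw [hg₁ X ⟨hAX, le_rfl⟩, hgA]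
  have hgft : g (f t) = A + lam' * (X - A) + mu' * d := by
    rw [hft, hg₂ (X + d) ⟨by linarith, by linarith⟩, hgX]; ring
  have hmu' : eps * (B - X) ≤ (lam' - mu') * (B - X) := by
    have hB := hg₂ B ⟨hXB.le, le_rfl⟩
    rw [hgB, hgX] at hB
    nlinarith
  have hdrop : eps ≤ lam' - mu' := le_of_mul_le_mul_right hmu' (by linarith)
  have hdlow : min (B - X) (eps * (X - A) / L) ≤ d := by
    refine min_le_min le_rfl ?_
    rw [div_le_div_iff₀ (by linarith) hlam'0]
    have h : eps * lam' ≤ (lam - lam') * L := mul_le_mul hlam hL hlam'0.le (by linarith)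
    nlinarith [mul_le_mul_of_nonneg_right h (sub_nonneg.2 hAX)]
  refine ⟨t, ⟨htA, htX⟩, ?_⟩
  calc eps * min (B - X) (eps * (X - A) / L) ≤ eps * d := mul_le_mul_of_nonneg_left hdlow heps
    _ ≤ (lam' - mu') * d := mul_le_mul_of_nonneg_right hdrop hd₀
    _ = f (g t) - g (f t) := by rw [hfgt, hgft]; ring

lemma exists_mul_le_abs_comp_sub_comp_swap {f g : ℝ → ℝ} {A X B lam mu lam' mu' eps K L : ℝ}
    (hA : 0 ≤ A) (hK : 1 < K) (hKA : K * A < X) (hKX : K * X < B)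
    (hfA : f A = A) (hgA : g A = A) (hfB : f B = B) (hgB : g B = B)
    (hf₁ : ∀ t ∈ Icc A X, f t = f A + lam * (t - A))
    (hf₂ : ∀ t ∈ Icc X B, f t = f X + mu * (t - X))
    (hg₁ : ∀ t ∈ Icc A X, g t = g A + lam' * (t - A))
    (hg₂ : ∀ t ∈ Icc X B, g t = g X + mu' * (t - X))
    (heps : 0 ≤ eps) (hlam : eps ≤ lam - 1) (hlam' : eps ≤ lam' - 1)
    (hsep : eps ≤ |lam - lam'|) (hL : lam ≤ L) (hL' : lam' ≤ L) :
    ∃ t ∈ Icc A X, eps * (min 1 (eps / L) * (1 - K⁻¹)) * t ≤ |f (g t) - g (f t)| := by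
  have hAX : A ≤ X := by nlinarith
  have hXB : X < B := by nlinarith
  have hgap : ∃ t ∈ Icc A X, eps * min (B - X) (eps * (X - A) / L) ≤ |f (g t) - g (f t)| := by
    rcases le_total lam' lam with h | h
    · obtain ⟨t, ht, hle⟩ := exists_le_comp_sub_comp_swap hAX hXB hfA hgA hgB hf₁ hg₁ hg₂ heps hlam'
        (by rwa [abs_of_nonneg (sub_nonneg.2 h)] at hsep) hL'
      exact ⟨t, ht, hle.trans (le_abs_self _)⟩
    · obtain ⟨t, ht, hle⟩ := exists_le_comp_sub_comp_swap hAX hXB hgA hfA hfB hg₁ hf₁ hf₂ heps hlam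
        (by rwa [abs_sub_comm, abs_of_nonneg (sub_nonneg.2 h)] at hsep) hL
      exact ⟨t, ht, hle.trans (abs_sub_comm (f (g t)) _ ▸ le_abs_self _)⟩
  obtain ⟨t, ht, hle⟩ := hgap
  refine ⟨t, ht, le_trans ?_ hle⟩
  have hL0 : 0 < L := by linarith
  have hKinv : K⁻¹ < 1 := inv_lt_one_of_one_lt₀ hK
  have hKA' : A ≤ K⁻¹ * X := by
    rw [← div_eq_inv_mul, le_div_iff₀ (by linarith)]; linarith
  set m := min 1 (eps / L)
  have hm : 0 ≤ m := le_min zero_le_one (div_nonneg heps hL0.le)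
  have hmX : m * (1 - K⁻¹) * t ≤ m * (1 - K⁻¹) * X :=
    mul_le_mul_of_nonneg_left ht.2 (mul_nonneg hm (by linarith))
  have hK' : 1 - K⁻¹ ≤ K - 1 := by
    have h := mul_nonneg (sub_nonneg.2 hK.le) (sub_nonneg.2 hKinv.le)
    rw [sub_mul, one_mul, mul_sub, mul_one, mul_inv_cancel₀ (by linarith)] at h
    linarith
  have hXK : (1 - K⁻¹) * X ≤ B - X := by
    nlinarith [mul_le_mul_of_nonneg_right hK' (hA.trans hAX)]
  have hmin : m * (1 - K⁻¹) * t ≤ min (B - X) (eps * (X - A) / L) := by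
    refine le_min ?_ ?_
    · nlinarith [min_le_left 1 (eps / L)]
    · have h : m * ((1 - K⁻¹) * X) ≤ eps / L * (X - A) :=
        mul_le_mul (min_le_right _ _) (by linarith) (by nlinarith) (div_nonneg heps hL0.le)
      rw [mul_div_right_comm]; linarith
  calc eps * (m * (1 - K⁻¹)) * t = eps * (m * (1 - K⁻¹) * t) := by ring
    _ ≤ _ := mul_le_mul_of_nonneg_left hmin heps

lemma frequently_mul_le_abs_comp_sub_comp_swap {f g : ℝ → ℝ} {a x lam mu lam' mu' : ℕ → ℝ}
    {K L eps : ℝ} (ha : ∀ n, 0 < a n) (hat : Tendsto a atTop atTop) (hax : ∀ n, a n < x n)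
    (hK : 1 < K) (hKa : ∀ n, K * a n < x n) (hKx : ∀ n, K * x n < a (n + 1))
    (hfa : ∀ n, f (a n) = a n) (hga : ∀ n, g (a n) = a n)
    (hf₁ : ∀ n, ∀ t ∈ Icc (a n) (x n), f t = f (a n) + lam n * (t - a n))
    (hf₂ : ∀ n, ∀ t ∈ Icc (x n) (a (n + 1)), f t = f (x n) + mu n * (t - x n))
    (hg₁ : ∀ n, ∀ t ∈ Icc (a n) (x n), g t = g (a n) + lam' n * (t - a n))
    (hg₂ : ∀ n, ∀ t ∈ Icc (x n) (a (n + 1)), g t = g (x n) + mu' n * (t - x n))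
    (hf : ∀ᶠ t in atTop, 0 ≤ f t) (hg : ∀ᶠ t in atTop, 0 ≤ g t)
    (hflim : 1 ≤ liminf (fun t => f t / t) atTop) (hglim : 1 ≤ liminf (fun t => g t / t) atTop)
    (heps : 0 < eps)
    (hsep : ∀ n, eps < |lam n - 1| ∧ eps < |lam' n - 1| ∧ eps < |lam n - lam' n|)
    (hL : ∀ n, lam n ≤ L) (hL' : ∀ n, lam' n ≤ L) :
    ∃ c > 0, ∃ᶠ t in atTop, c * t ≤ |f (g t) - g (f t)| := by
  have hx : Tendsto x atTop atTop := tendsto_atTop_mono (fun n => (hax n).le) hat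
  have hlam := eventually_one_add_lt_slope hf hflim ha hK hKa hx hfa
    (fun n => hf₁ n (x n) ⟨(hax n).le, le_rfl⟩) heps fun n => (hsep n).1
  have hlam' := eventually_one_add_lt_slope hg hglim ha hK hKa hx hga
    (fun n => hg₁ n (x n) ⟨(hax n).le, le_rfl⟩) heps fun n => (hsep n).2.1
  obtain ⟨n₀, hn₀⟩ := hlam.exists
  have hL0 : 0 < L := by linarith [hL n₀]
  refine ⟨eps * (min 1 (eps / L) * (1 - K⁻¹)), mul_pos heps (mul_pos
    (lt_min one_pos (div_pos heps hL0)) (sub_pos.2 (inv_lt_one_of_one_lt₀ hK))), ?_⟩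
  refine frequently_atTop.2 fun T => ?_
  obtain ⟨n, ⟨hn, hn'⟩, hTn⟩ := ((hlam.and hlam').and (hat.eventually_ge_atTop T)).exists
  obtain ⟨t, ht, hle⟩ := exists_mul_le_abs_comp_sub_comp_swap (ha n).le hK (hKa n) (hKx n)
    (hfa n) (hga n) (hfa (n + 1)) (hga (n + 1)) (hf₁ n) (hf₂ n) (hg₁ n) (hg₂ n) heps.le
    (by linarith) (by linarith) (hsep n).2.2.le (hL n) (hL' n)
  exact ⟨t, hTn.trans ht.1, hle⟩

theorem stmt15_general (f g : ℝ → ℝ)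
    (hfm : StrictMonoOn f (Set.Ici 0)) (hgm : StrictMonoOn g (Set.Ici 0))
    (a : ℕ → ℝ) (ha0 : 0 < a 0) (ham : StrictMono a) (hat : Tendsto a atTop atTop)
    (hfa : ∀ n, f (a n) = a n) (hga : ∀ n, g (a n) = a n)
    (x : ℕ → ℝ) (hx : ∀ n, x n ∈ Set.Ioo (a n) (a (n + 1)))
    (lam mu lam' mu' : ℕ → ℝ)
    (hf1 : ∀ n, ∀ t ∈ Set.Icc (a n) (x n), f t = f (a n) + lam n * (t - a n))
    (hf2 : ∀ n, ∀ t ∈ Set.Icc (x n) (a (n + 1)), f t = f (x n) + mu n * (t - x n))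
    (hg1 : ∀ n, ∀ t ∈ Set.Icc (a n) (x n), g t = g (a n) + lam' n * (t - a n))
    (hg2 : ∀ n, ∀ t ∈ Set.Icc (x n) (a (n + 1)), g t = g (x n) + mu' n * (t - x n))
    (L : ℝ) (hL : 1 < L)
    (hbound : ∀ n, 1 / L ≤ lam n ∧ lam n ≤ L ∧ 1 / L ≤ mu n ∧ mu n ≤ L ∧
      1 / L ≤ lam' n ∧ lam' n ≤ L ∧ 1 / L ≤ mu' n ∧ mu' n ≤ L)
    (hfinf : 1 ≤ liminf (fun t : ℝ => f t / t) atTop)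
    (hginf : 1 ≤ liminf (fun t : ℝ => g t / t) atTop)
    (eps : ℝ) (heps : 0 < eps) (K K' : ℝ) (hK : 1 < K)
    (hsep : ∀ n, eps < |lam n - 1| ∧ eps < |lam' n - 1| ∧ eps < |lam n - lam' n|)
    (hratio : ∀ n, K < x n / a n ∧ x n / a n < K' ∧
      K < a (n + 1) / x n ∧ a (n + 1) / x n < K') :
    ∀ h h' : ℝ → ℝ, IsQI h → IsQI h' →
      Tendsto (fun t => h t / t) atTop (𝓝 1) →
      Tendsto (fun t => h' t / t) atTop (𝓝 1) →
      ¬ ∃ C : ℝ, ∀ t : ℝ, 0 ≤ t →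
        |h (f (h' (g t))) - h' (g (h (f t)))| ≤ C := by
  intro h h' _ _ hh hh' ⟨C, hC⟩
  have hapos : ∀ n, 0 < a n := fun n => ha0.trans_le (ham.monotone n.zero_le)
  have hslope : ∀ {s : ℝ}, 1 / L ≤ s → s ≤ L → |s| ≤ L.toNNReal := fun h₁ h₂ => by
    rw [Real.coe_toNNReal _ (by linarith), abs_le]
    exact ⟨by linarith [one_div_pos.2 (zero_lt_one.trans hL)], h₂⟩
  have hfL := lipschitzOnWith_Ici_of_affine_pieces hat hf1 hf2
    (fun n => hslope (hbound n).1 (hbound n).2.1)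
    (fun n => hslope (hbound n).2.2.1 (hbound n).2.2.2.1)
  have hgL := lipschitzOnWith_Ici_of_affine_pieces hat hg1 hg2
    (fun n => hslope (hbound n).2.2.2.2.1 (hbound n).2.2.2.2.2.1)
    (fun n => hslope (hbound n).2.2.2.2.2.2.1 (hbound n).2.2.2.2.2.2.2)
  have hf_top := tendsto_atTop_of_monotoneOn_of_le_apply hfm.monotoneOn
    (fun n => (hapos n).le) (fun n => (hfa n).ge) hat
  have hg_top := tendsto_atTop_of_monotoneOn_of_le_apply hgm.monotoneOn
    (fun n => (hapos n).le) (fun n => (hga n).ge) hat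
  obtain ⟨c, hc, hgap⟩ := frequently_mul_le_abs_comp_sub_comp_swap hapos hat
    (fun n => (hx n).1) hK (fun n => (lt_div_iff₀ (hapos n)).1 (hratio n).1)
    (fun n => (lt_div_iff₀ ((hapos n).trans (hx n).1)).1 (hratio n).2.2.1)
    hfa hga hf1 hf2 hg1 hg2 (hf_top.eventually_ge_atTop 0) (hg_top.eventually_ge_atTop 0)
    hfinf hginf heps hsep (fun n => (hbound n).2.1) (fun n => (hbound n).2.2.2.2.2.1)
  exact (isLittleO_comp_sub_comp_swap_of_bounded_comm (isEquivalent_of_tendsto_one hh)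
    (isEquivalent_of_tendsto_one hh') hfL hgL hf_top hg_top hC).not_frequently_mul_le_abs hc hgap

/-- under the slope-separation and ratio hypotheses on the two-piece
piecewise-linear quasi-isometries `f, g` fixing each `aₙ`, for all quasi-isometries
`h, h'` with `h(x)/x → 1` and `h'(x)/x → 1`, the maps `h∘f` and `h'∘g` do not commute
in `QI(ℝ₊)`. -/
theorem stmt15 (f g : ℝ → ℝ) (hf : IsQI f) (hg : IsQI g)
    (hfm : StrictMonoOn f (Set.Ici 0)) (hgm : StrictMonoOn g (Set.Ici 0))
    (hfpl : IsPL f) (hgpl : IsPL g)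
    (a : ℕ → ℝ) (ha0 : 0 < a 0) (ham : StrictMono a) (hat : Tendsto a atTop atTop)
    (hfa : ∀ n, f (a n) = a n) (hga : ∀ n, g (a n) = a n)
    (x : ℕ → ℝ) (hx : ∀ n, x n ∈ Set.Ioo (a n) (a (n + 1)))
    (lam mu lam' mu' : ℕ → ℝ)
    (hf1 : ∀ n, ∀ t ∈ Set.Icc (a n) (x n), f t = f (a n) + lam n * (t - a n))
    (hf2 : ∀ n, ∀ t ∈ Set.Icc (x n) (a (n + 1)), f t = f (x n) + mu n * (t - x n))
    (hg1 : ∀ n, ∀ t ∈ Set.Icc (a n) (x n), g t = g (a n) + lam' n * (t - a n))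
    (hg2 : ∀ n, ∀ t ∈ Set.Icc (x n) (a (n + 1)), g t = g (x n) + mu' n * (t - x n))
    (L : ℝ) (hL : 1 < L)
    (hbound : ∀ n, 1 / L ≤ lam n ∧ lam n ≤ L ∧ 1 / L ≤ mu n ∧ mu n ≤ L ∧
      1 / L ≤ lam' n ∧ lam' n ≤ L ∧ 1 / L ≤ mu' n ∧ mu' n ≤ L)
    (hfinf : 1 ≤ liminf (fun t : ℝ => f t / t) atTop)
    (hginf : 1 ≤ liminf (fun t : ℝ => g t / t) atTop)
    (eps : ℝ) (heps : 0 < eps) (K K' : ℝ) (hK : 1 < K) (hK' : 1 < K')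
    (hsep : ∀ n, eps < |lam n - 1| ∧ eps < |lam' n - 1| ∧ eps < |lam n - lam' n|)
    (hratio : ∀ n, K < x n / a n ∧ x n / a n < K' ∧
      K < a (n + 1) / x n ∧ a (n + 1) / x n < K') :
    ∀ h h' : ℝ → ℝ, IsQI h → IsQI h' →
      Tendsto (fun t => h t / t) atTop (𝓝 1) →
      Tendsto (fun t => h' t / t) atTop (𝓝 1) →
      ¬ ∃ C : ℝ, ∀ t : ℝ, 0 ≤ t →
        |h (f (h' (g t))) - h' (g (h (f t)))| ≤ C :=
  stmt15_general f g hfm hgm a ha0 ham hat hfa hga x hx lam mu lam' mu' hf1 hf2 hg1 hg2 L hL hbound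
    hfinf hginf eps heps K K' hK hsep hratio
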